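/- arXiv:2205.00744 — 3 statements merged into one kernel-verified Lean document; each statement's English description precedes it below -/
import Mathlib

section
/- Suppose b = b_k,…,b_0 is a colour witness for ρ, d = φ(v_{m+1}) ∈ C⁻ is odd, and for every j ≤ k, either b_j = ⊥ or b_j > d. Then b itself is a colour witness for ρ' = v_1,…,v_m,v_{m+1}. -/
open scoped Classical

/-- Membership in `C⁻`, where `C = {lo,…,hi}`: everything of `C` except `hi` when `hi` is odd. -/
def CminusMem (lo hi c : ℕ) : Prop := lo ≤ c ∧ c ≤ hi ∧ (Even hi ∨ c ≠ hi)

/-- The index of the first position of an `i`-colour-witness: `1` if the colour `i` is even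
and `0` if it is odd. -/
def startIdx (i : ℕ) : ℕ := if Even i then 1 else 0

variable {V : Type*}

/-- `p`, on indices `startIdx i, …, len`, is an `i`-colour-witness of length `len` for the
play prefix `v_1,…,v_m`: strictly increasing positions, all but the final one of even colour,
the final one of colour `i`, with inner domination and outer domination by `i`. -/
def IsCWit (φ : V → ℕ) (v : ℕ → V) (m i len : ℕ) (p : ℕ → ℕ) : Prop :=
  1 ≤ len ∧
  (∀ j, startIdx i ≤ j → j ≤ len → 1 ≤ p j ∧ p j ≤ m) ∧
  (∀ j, startIdx i ≤ j → j < len → p j < p (j + 1)) ∧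
  (∀ j, startIdx i ≤ j → j < len → Even (φ (v (p j)))) ∧
  φ (v (p len)) = i ∧
  (∀ j, startIdx i ≤ j → j < len → ∀ t, p j ≤ t → t ≤ p (j + 1) →
      φ (v t) ≤ max (φ (v (p j))) (φ (v (p (j + 1))))) ∧
  (∀ t, p len ≤ t → t ≤ m → φ (v t) ≤ i)

/-- The colour `c` occurs among the entries `b_0,…,b_k` of `b`. -/
def occursIn (k : ℕ) (b : ℕ → Option ℕ) (c : ℕ) : Prop := ∃ p ≤ k, b p = some c

/-- `unblk(i,b)`: the colours `j` occurring in `b` with `i ≤ j < odd(i,b)`, where `odd(i,b)`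
is the least odd colour strictly greater than `i` occurring in `b` (`∞` if none). -/
noncomputable def unblkF (hi k : ℕ) (b : ℕ → Option ℕ) (i : ℕ) : Finset ℕ :=
  (Finset.range (hi + 1)).filter fun j =>
    occursIn k b j ∧ i ≤ j ∧ ∀ o, Odd o → i < o → o ≤ j → ¬ occursIn k b o

/-- `ubp(i,b)`: the positions of `b` whose entry is a colour of `unblk(i,b)`. -/
noncomputable def ubpF (hi k : ℕ) (b : ℕ → Option ℕ) (i : ℕ) : Finset ℕ :=
  (Finset.range (k + 1)).filter fun p => ∃ c, b p = some c ∧ c ∈ unblkF hi k b i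

/-- `b = b_k,…,b_0` is a colour witness for the play prefix `v_1,…,v_m`, for the colouring
`φ` into `C = {lo,…,hi}`. -/
def IsColourWitness (lo hi : ℕ) (φ : V → ℕ) (v : ℕ → V) (m k : ℕ)
    (b : ℕ → Option ℕ) : Prop :=
  (∀ p ≤ k, ∀ c, b p = some c → CminusMem lo hi c) ∧
  -- order
  (∀ i j, j < i → i ≤ k → ∀ ci cj, b i = some ci → b j = some cj → cj ≤ ci) ∧
  -- conciseness
  (∀ o, Odd o → ∀ i j, i ≤ k → j ≤ k → i ≠ j → b i = some o → ¬ b j = some o) ∧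
  (∀ c, b 0 = some c → ¬ Odd c) ∧
  -- the family of colour witnesses
  ∃ (ℓ : ℕ → ℕ) (P : ℕ → ℕ → ℕ),
    (∀ i, occursIn k b i → IsCWit φ v m i (ℓ i) (P i)) ∧
    -- ordered witnesses
    (∀ i j, occursIn k b i → occursIn k b j → j < i → P i (ℓ i) < P j (startIdx j)) ∧
    -- length constraints
    (∀ i, CminusMem lo hi i → (∑ p ∈ ubpF hi k b i, 2 ^ p) ≤ ∑ j ∈ unblkF hi k b i, ℓ j)

/-- Stale update lemma for colour witnesses: if `d = φ(v_{m+1}) ∈ C⁻` is odd and every entry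
of `b` is `⊥` or a colour `> d`, then `b` itself is a colour witness for
`ρ' = v_1,…,v_m,v_{m+1}`. -/
theorem colour_witness_update_stale (lo hi : ℕ) (hlo : lo = 1 ∨ lo = 2) (hlohi : lo ≤ hi)
    (φ : V → ℕ) (hφ : ∀ x, φ x ∈ Set.Icc lo hi) (v : ℕ → V) (m : ℕ) (hm : 1 ≤ m)
    (k : ℕ) (b : ℕ → Option ℕ) (hb : IsColourWitness lo hi φ v m k b)
    (hdodd : Odd (φ (v (m + 1)))) (hd : CminusMem lo hi (φ (v (m + 1))))
    (hgt : ∀ j ≤ k, b j = none ∨ ∃ c, b j = some c ∧ φ (v (m + 1)) < c) :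
    IsColourWitness lo hi φ v (m + 1) k b := by
  obtain ⟨h1, h2, h3, h4, ℓ, P, hwit, hord, hlen⟩ := hb
  refine ⟨h1, h2, h3, h4, ℓ, P, ?_, hord, hlen⟩
  intro i hi
  obtain ⟨p, hpk, hbp⟩ := hi
  have hdi : φ (v (m + 1)) < i := by
    rcases hgt p hpk with h | ⟨c, hc, hcd⟩
    · simp [h] at hbp
    · rw [hbp] at hc; injection hc with h; omega
  obtain ⟨hl, hbnd, hmono, heven, hfin, hinner, houter⟩ := hwit i ⟨p, hpk, hbp⟩
  refine ⟨hl, fun j hj hj' => ⟨(hbnd j hj hj').1, le_trans (hbnd j hj hj').2 (by omega)⟩,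
    hmono, heven, hfin, hinner, ?_⟩
  intro t ht ht'
  rcases Nat.lt_or_ge t (m + 1) with h | h
  · exact houter t ht (by omega)
  · have : t = m + 1 := by omega
    subst this; omega
end

section
/- Suppose b = b_k,…,b_0 is a colour witness for ρ, d = φ(v_{m+1}) ∈ C⁻ is odd, and there exists an index j such that b_j ≠ ⊥, d ≥ b_j, and for all i > j, either b_i = ⊥ or b_i > d. Define c by c_i = b_i for all i > j, c_j = d if j ≠ 0 and c_j = ⊥ if j = 0, and c_i = ⊥ for all i < j. Then c is a colour witness for ρ' = v_1,…,v_m,v_{m+1}. -/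
open scoped Classical

variable {V : Type*}

lemma mem_unblkF {hi k i x : ℕ} {b : ℕ → Option ℕ} :
    x ∈ unblkF hi k b i ↔ x ≤ hi ∧ occursIn k b x ∧ i ≤ x ∧
      ∀ o, Odd o → i < o → o ≤ x → ¬ occursIn k b o := by
  simp [unblkF, Finset.mem_filter, Finset.mem_range, Nat.lt_succ_iff]

lemma mem_ubpF {hi k i p : ℕ} {b : ℕ → Option ℕ} :
    p ∈ ubpF hi k b i ↔ p ≤ k ∧ ∃ x, b p = some x ∧ x ∈ unblkF hi k b i := by
  simp [ubpF, Finset.mem_filter, Finset.mem_range, Nat.lt_succ_iff]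

lemma isCWit_mono (φ : V → ℕ) (v : ℕ → V) (m i len : ℕ) (p : ℕ → ℕ)
    (h : IsCWit φ v m i len p) (hlast : φ (v (m + 1)) ≤ i) :
    IsCWit φ v (m + 1) i len p := by
  obtain ⟨h1, h2, h3, h4, h5, h6, h7⟩ := h
  refine ⟨h1, fun j hj hj' => ⟨(h2 j hj hj').1, le_trans (h2 j hj hj').2 (Nat.le_succ m)⟩,
    h3, h4, h5, h6, fun t ht ht' => ?_⟩
  rcases Nat.lt_or_ge t (m + 1) with h | h
  · exact h7 t ht (by omega)
  · have : t = m + 1 := by omega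
    subst this; exact hlast

lemma isCWit_extend (φ : V → ℕ) (v : ℕ → V) (m cj d l : ℕ) (P : ℕ → ℕ)
    (h : IsCWit φ v m cj l P) (hcjd : cj ≤ d) (hdv : φ (v (m + 1)) = d) (hdodd : Odd d) :
    IsCWit φ v (m + 1) d l (fun i => if i < l then P (i + startIdx cj) else m + 1) := by
  obtain ⟨h1, h2, h3, h4, h5, h6, h7⟩ := h
  have hsle : startIdx cj ≤ 1 := by unfold startIdx; split <;> omega
  have hstart : ∀ idx : ℕ, startIdx cj ≤ idx + startIdx cj := fun idx => Nat.le_add_left _ _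
  have hbnd : ∀ idx, idx < l → idx + startIdx cj ≤ l := by intro idx h; omega
  have hkey : ∀ idx, idx < l → Even (φ (v (P (idx + startIdx cj)))) := by
    intro idx hidx
    rcases Nat.lt_or_ge (idx + startIdx cj) l with hlt | hge
    · exact h4 _ (hstart idx) hlt
    · have heq : idx + startIdx cj = l := le_antisymm (hbnd idx hidx) hge
      have hs1 : startIdx cj = 1 := by omega
      have hcje : Even cj := by
        by_contra hc; simp [startIdx, hc] at hs1
      rw [heq, h5]; exact hcje
  refine ⟨h1, ?_, ?_, ?_, ?_, ?_, ?_⟩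
  · intro i _ hil
    by_cases hil' : i < l
    · simp only [if_pos hil']
      have := h2 (i + startIdx cj) (hstart i) (hbnd i hil')
      exact ⟨this.1, by omega⟩
    · simp only [if_neg hil']; omega
  · intro i _ hil
    by_cases h' : i + 1 < l
    · simp only [if_pos hil, if_pos h']
      have e : i + 1 + startIdx cj = i + startIdx cj + 1 := by omega
      rw [e]
      exact h3 (i + startIdx cj) (hstart i) (by omega)
    · simp only [if_pos hil, if_neg h']
      have := (h2 (i + startIdx cj) (hstart i) (hbnd i hil)).2; omega
  · intro i _ hil
    simp only [if_pos hil]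
    exact hkey i hil
  · simp only [if_neg (lt_irrefl l)]; exact hdv
  · intro i _ hil t ht1 ht2
    simp only [if_pos hil] at ht1 ⊢
    by_cases h' : i + 1 < l
    · simp only [if_pos h'] at ht2 ⊢
      have e : i + 1 + startIdx cj = i + startIdx cj + 1 := by omega
      rw [e] at ht2 ⊢
      exact h6 (i + startIdx cj) (hstart i) (by omega) t ht1 ht2
    · simp only [if_neg h'] at ht2 ⊢
      rw [hdv]
      rcases Nat.lt_or_ge t (m + 1) with htm | htm
      swap
      · have : t = m + 1 := by omega
        subst this
        rw [hdv]
        exact le_trans (le_max_right _ _) (le_refl _)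
      · -- t ≤ m
        have htm' : t ≤ m := by omega
        by_cases hcje : Even cj
        · have hs1 : startIdx cj = 1 := by simp [startIdx, hcje]
          have heq : i + startIdx cj = l := by omega
          rw [heq] at ht1 ⊢
          rw [h5]
          exact le_trans (le_trans (h7 t ht1 htm') hcjd) (le_max_right _ _)
        · have hs0 : startIdx cj = 0 := by simp [startIdx, hcje]
          rw [hs0, Nat.add_zero] at ht1 ⊢
          have hil' : i = l - 1 := by omega
          rcases Nat.le_total t (P l) with htl | htl
          · have hh := h6 i (by omega) hil t ht1 (by
              have : i + 1 = l := by omega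
              rw [this]; exact htl)
            have : i + 1 = l := by omega
            rw [this, h5] at hh
            exact le_trans hh (max_le_max (le_refl _) hcjd)
          · exact le_trans (le_trans (h7 t htl htm') hcjd) (le_max_right _ _)
  · intro t ht1 ht2
    simp only [if_neg (lt_irrefl l)] at ht1
    have : t = m + 1 := by omega
    subst this
    exact le_of_eq hdv

/-- Local update lemma for an odd colour `d = φ(v_{m+1}) ∈ C⁻`: if there is an index `j` with
`b_j ≠ ⊥`, `d ≥ b_j`, and `b_i = ⊥` or `b_i > d` for all `i > j`, then setting `c_i = b_i`
for `i > j`, `c_j = d` if `j ≠ 0` (and `c_j = ⊥` if `j = 0`), and `c_i = ⊥` for `i < j`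
yields a colour witness for `ρ' = v_1,…,v_m,v_{m+1}`. -/
theorem colour_witness_update_odd_local (lo hi : ℕ) (hlo : lo = 1 ∨ lo = 2) (hlohi : lo ≤ hi)
    (φ : V → ℕ) (hφ : ∀ x, φ x ∈ Set.Icc lo hi) (v : ℕ → V) (m : ℕ) (hm : 1 ≤ m)
    (k : ℕ) (b : ℕ → Option ℕ) (hb : IsColourWitness lo hi φ v m k b)
    (hdodd : Odd (φ (v (m + 1)))) (hd : CminusMem lo hi (φ (v (m + 1))))
    (j : ℕ) (hj : j ≤ k)
    (hatj : ∃ c, b j = some c ∧ c ≤ φ (v (m + 1)))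
    (habove : ∀ i, j < i → i ≤ k → b i = none ∨ ∃ c, b i = some c ∧ φ (v (m + 1)) < c) :
    IsColourWitness lo hi φ v (m + 1) k
      (fun i => if j < i then b i
                else if i = j ∧ j ≠ 0 then some (φ (v (m + 1))) else none) := by
  classical
  obtain ⟨hmem, horder, hconc, hzero, ℓ, P, hwit, hord, hlen⟩ := hb
  obtain ⟨cj, hbj, hcjd⟩ := hatj
  set d := φ (v (m + 1)) with hdd
  set c : ℕ → Option ℕ := fun i => if j < i then b i
      else if i = j ∧ j ≠ 0 then some d else none with hc
  have hcgt : ∀ p, j < p → c p = b p := by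
    intro p hp; simp [hc, hp]
  have hcj : j ≠ 0 → c j = some d := by
    intro h0; simp [hc, h0]
  have hclow : ∀ p, ¬ j < p → ¬(p = j ∧ j ≠ 0) → c p = none := by
    intro p h1 h2; simp [hc, h1, h2]
  have hcsome : ∀ p x, c p = some x → (j < p ∧ b p = some x) ∨ (p = j ∧ j ≠ 0 ∧ x = d) := by
    intro p x h
    by_cases h1 : j < p
    · left; exact ⟨h1, by rwa [hcgt p h1] at h⟩
    · by_cases h2 : p = j ∧ j ≠ 0
      · right
        refine ⟨h2.1, h2.2, ?_⟩
        rw [hc] at h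
        simp only [if_neg h1, if_pos h2] at h
        exact (Option.some.injEq _ _ ▸ h).symm
      · rw [hclow p h1 h2] at h; cases h
  have hlowb : ∀ p, p ≤ j → ∀ x, b p = some x → x ≤ cj := by
    intro p hp x h
    rcases eq_or_lt_of_le hp with he | hl
    · rw [he, hbj] at h
      injection h with h; omega
    · exact horder j p hl hj cj x hbj h
  have hhighb : ∀ p, j < p → p ≤ k → ∀ x, b p = some x → d < x := by
    intro p h1 h2 x h
    rcases habove p h1 h2 with hn | ⟨y, hy, hdy⟩
    · rw [hn] at h; cases h
    · rw [hy] at h; injection h with h; omega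
  have hmidb : ∀ x, occursIn k b x → x ≤ cj ∨ d < x := by
    rintro x ⟨p, hp, hbp⟩
    rcases le_or_gt p j with h | h
    · left; exact hlowb p h x hbp
    · right; exact hhighb p h hp x hbp
  have hoccd : ∀ x, occursIn k c x → d ≤ x := by
    rintro x ⟨p, hp, hcp⟩
    rcases hcsome p x hcp with ⟨h1, h2⟩ | ⟨_, _, h3⟩
    · exact le_of_lt (hhighb p h1 hp x h2)
    · omega
  have hocchi : ∀ x, d < x → (occursIn k c x ↔ occursIn k b x) := by
    intro x hx
    constructor
    · rintro ⟨p, hp, hcp⟩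
      rcases hcsome p x hcp with ⟨h1, h2⟩ | ⟨_, _, h3⟩
      · exact ⟨p, hp, h2⟩
      · omega
    · rintro ⟨p, hp, hbp⟩
      have h1 : j < p := by
        by_contra h'
        have := hlowb p (by omega) x hbp; omega
      exact ⟨p, hp, by rw [hcgt p h1]; exact hbp⟩
  have hposhi : ∀ p x, d < x → p ≤ k → (c p = some x ↔ b p = some x) := by
    intro p x hx hp
    constructor
    · intro h
      rcases hcsome p x h with ⟨h1, h2⟩ | ⟨_, _, h3⟩
      · exact h2
      · omega
    · intro h
      have h1 : j < p := by
        by_contra h'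
        have := hlowb p (by omega) x h; omega
      rw [hcgt p h1]; exact h
  have hocc_cj : occursIn k b cj := ⟨j, hj, hbj⟩
  have hcjC : CminusMem lo hi cj := hmem j hj cj hbj
  have hdhi : d ≤ hi := hd.2.1
  have hwcj : IsCWit φ v m cj (ℓ cj) (P cj) := hwit cj hocc_cj
  have hdv : φ (v (m + 1)) = d := hdd.symm
  refine ⟨?_, ?_, ?_, ?_, ?_⟩
  · -- membership
    intro p hp x hx
    rcases hcsome p x hx with ⟨h1, h2⟩ | ⟨_, _, h3⟩
    · exact hmem p hp x h2
    · rw [h3]; exact hd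
  · -- order
    intro i p hpi hik ci cp hci hcp
    rcases hcsome i ci hci with ⟨hi1, hi2⟩ | ⟨hi1, hi2, hi3⟩
    · rcases hcsome p cp hcp with ⟨hp1, hp2⟩ | ⟨hp1, hp2, hp3⟩
      · exact horder i p hpi hik ci cp hi2 hp2
      · subst hp3; exact le_of_lt (hhighb i hi1 hik ci hi2)
    · rcases hcsome p cp hcp with ⟨hp1, hp2⟩ | ⟨hp1, hp2, hp3⟩ <;> omega
  · -- conciseness
    intro o ho i p hik hpk hip hco hcp
    rcases hcsome i o hco with ⟨hi1, hi2⟩ | ⟨hi1, hi2, hi3⟩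
    · rcases hcsome p o hcp with ⟨hp1, hp2⟩ | ⟨hp1, hp2, hp3⟩
      · exact hconc o ho i p hik hpk hip hi2 hp2
      · subst hp3
        exact absurd (hhighb i hi1 hik d hi2) (lt_irrefl d)
    · rcases hcsome p o hcp with ⟨hp1, hp2⟩ | ⟨hp1, hp2, hp3⟩
      · subst hi3
        exact absurd (hhighb p hp1 hpk d hp2) (lt_irrefl d)
      · omega
  · -- b 0 not odd
    intro x hx
    have hc0 : c 0 = none := by
      by_cases h0 : j = 0
      · subst h0; simp [hc]
      · exact hclow 0 (by omega) (by simp; omega)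
    rw [hc0] at hx; cases hx
  · -- family
    have hdodd' : Odd d := hdodd
    have hnew : IsCWit φ v (m + 1) d (ℓ cj)
        (fun i => if i < ℓ cj then P cj (i + startIdx cj) else m + 1) :=
      isCWit_extend φ v m cj d (ℓ cj) (P cj) hwcj hcjd hdv hdodd'
    have hsd : startIdx d = 0 := by
      simp [startIdx, Nat.even_iff, Nat.odd_iff.mp hdodd']
    refine ⟨Function.update ℓ d (ℓ cj),
      Function.update P d (fun i => if i < ℓ cj then P cj (i + startIdx cj) else m + 1),
      ?_, ?_, ?_⟩
    · -- witnesses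
      intro x hx
      rcases eq_or_lt_of_le (hoccd x hx) with he | hlt
      · rw [← he]
        simp only [Function.update_self]
        exact hnew
      · have hne : x ≠ d := by omega
        rw [Function.update_of_ne hne, Function.update_of_ne hne]
        refine isCWit_mono φ v m x (ℓ x) (P x) (hwit x ((hocchi x hlt).mp hx)) ?_
        rw [hdv]; omega
    · -- ordered witnesses
      intro x y hx hy hyx
      have hdy := hoccd y hy
      rcases eq_or_lt_of_le hdy with he | hlt
      · have hxd : d < x := by omega
        have hxne : x ≠ d := by omega
        rw [Function.update_of_ne hxne, Function.update_of_ne hxne, ← he, hsd]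
        simp only [Function.update_self]
        have hl1 : 1 ≤ ℓ cj := hwcj.1
        rw [if_pos (by omega : (0:ℕ) < ℓ cj), Nat.zero_add]
        exact hord x cj ((hocchi x hxd).mp hx) hocc_cj (by omega)
      · have hyne : y ≠ d := by omega
        have hxne : x ≠ d := by omega
        rw [Function.update_of_ne hxne, Function.update_of_ne hxne,
          Function.update_of_ne hyne]
        exact hord x y ((hocchi x (by omega)).mp hx) ((hocchi y hlt).mp hy) hyx
    · -- length constraints
      intro i hiC
      by_cases hid : d < i
      · -- transfer case
        have hU : unblkF hi k c i = unblkF hi k b i := by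
          ext x
          rw [mem_unblkF, mem_unblkF]
          constructor
          · rintro ⟨hx1, hx2, hx3, hx4⟩
            refine ⟨hx1, (hocchi x (by omega)).mp hx2, hx3, ?_⟩
            intro o ho hio hox hob
            exact hx4 o ho hio hox ((hocchi o (by omega)).mpr hob)
          · rintro ⟨hx1, hx2, hx3, hx4⟩
            refine ⟨hx1, (hocchi x (by omega)).mpr hx2, hx3, ?_⟩
            intro o ho hio hox hoc
            exact hx4 o ho hio hox ((hocchi o (by omega)).mp hoc)
        have hP : ubpF hi k c i = ubpF hi k b i := by
          ext p
          rw [mem_ubpF, mem_ubpF, hU]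
          constructor
          · rintro ⟨hp1, x, hpx, hxU⟩
            have hxd : d < x := by
              have := (mem_unblkF.mp hxU).2.2.1; omega
            exact ⟨hp1, x, (hposhi p x hxd hp1).mp hpx, hxU⟩
          · rintro ⟨hp1, x, hpx, hxU⟩
            have hxd : d < x := by
              have := (mem_unblkF.mp hxU).2.2.1; omega
            exact ⟨hp1, x, (hposhi p x hxd hp1).mpr hpx, hxU⟩
        rw [hU, hP]
        refine le_trans (hlen i hiC) (le_of_eq ?_)
        refine Finset.sum_congr rfl ?_
        intro x hx
        have hxne : x ≠ d := by
          have := (mem_unblkF.mp hx).2.2.1; omega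
        exact (Function.update_of_ne hxne _ _).symm
      · by_cases h0 : j = 0
        · -- j = 0 : only colours > d occur in c
          have hocc0 : ∀ x, occursIn k c x → d < x := by
            rintro x ⟨p, hp, hcp⟩
            rcases hcsome p x hcp with ⟨h1, h2⟩ | ⟨_, h2, _⟩
            · exact hhighb p h1 hp x h2
            · exact absurd h0 h2
          rcases Finset.eq_empty_or_nonempty (unblkF hi k c i) with hS | hS
          · have hP : ubpF hi k c i = ∅ := by
              rw [Finset.eq_empty_iff_forall_notMem]
              intro p hp
              obtain ⟨hp1, x, hpx, hxU⟩ := mem_ubpF.mp hp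
              rw [hS] at hxU
              exact absurd hxU (Finset.notMem_empty x)
            rw [hS, hP]; simp
          · set e := (unblkF hi k c i).min' hS with he
            have heM : e ∈ unblkF hi k c i := Finset.min'_mem _ hS
            obtain ⟨he1, he2, he3, he4⟩ := mem_unblkF.mp heM
            have hed : d < e := hocc0 e he2
            have hU : unblkF hi k c i = unblkF hi k b e := by
              ext x
              rw [mem_unblkF, mem_unblkF]
              constructor
              · rintro ⟨hx1, hx2, hx3, hx4⟩
                have hdx : d < x := hocc0 x hx2
                refine ⟨hx1, (hocchi x hdx).mp hx2,
                  Finset.min'_le _ x (mem_unblkF.mpr ⟨hx1, hx2, hx3, hx4⟩), ?_⟩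
                intro o ho hoe hox hob
                exact hx4 o ho (by omega) hox ((hocchi o (by omega)).mpr hob)
              · rintro ⟨hx1, hx2, hx3, hx4⟩
                have hdx : d < x := by omega
                refine ⟨hx1, (hocchi x hdx).mpr hx2, by omega, ?_⟩
                intro o ho hio hox hoc
                have hdo : d < o := hocc0 o hoc
                rcases le_or_gt o e with h' | h'
                · exact he4 o ho hio h' hoc
                · exact hx4 o ho h' hox ((hocchi o hdo).mp hoc)
            have hCb : CminusMem lo hi e := by
              obtain ⟨p, hp, hbp⟩ := (hocchi e hed).mp he2
              exact hmem p hp e hbp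
            have hP : ubpF hi k c i = ubpF hi k b e := by
              ext p
              rw [mem_ubpF, mem_ubpF, hU]
              constructor
              · rintro ⟨hp1, x, hpx, hxU⟩
                have hxd : d < x := by
                  have := (mem_unblkF.mp hxU).2.2.1; omega
                exact ⟨hp1, x, (hposhi p x hxd hp1).mp hpx, hxU⟩
              · rintro ⟨hp1, x, hpx, hxU⟩
                have hxd : d < x := by
                  have := (mem_unblkF.mp hxU).2.2.1; omega
                exact ⟨hp1, x, (hposhi p x hxd hp1).mpr hpx, hxU⟩
            rw [hU, hP]
            refine le_trans (hlen e hCb) (le_of_eq ?_)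
            refine Finset.sum_congr rfl ?_
            intro x hx
            have hxne : x ≠ d := by
              have := (mem_unblkF.mp hx).2.2.1; omega
            exact (Function.update_of_ne hxne _ _).symm
        · by_cases hieq : i = d
          · -- main case : d = d, j ≠ 0
            subst hieq
            have hdocc : occursIn k c d := ⟨j, hj, hcj h0⟩
            set E : Finset ℕ := (Finset.range (hi + 1)).filter
                (fun x => occursIn k b x ∧ d < x ∧
                  ∀ o, Odd o → d < o → o ≤ x → ¬ occursIn k b o) with hE
            have hmE : ∀ x, x ∈ E ↔ (x ≤ hi ∧ occursIn k b x ∧ d < x ∧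
                ∀ o, Odd o → d < o → o ≤ x → ¬ occursIn k b o) := by
              intro x
              simp [hE, Finset.mem_filter, Finset.mem_range, Nat.lt_succ_iff]
            have hA : unblkF hi k c d = insert d E := by
              ext x
              rw [mem_unblkF, Finset.mem_insert, hmE]
              constructor
              · rintro ⟨hx1, hx2, hx3, hx4⟩
                rcases eq_or_lt_of_le hx3 with he | hlt
                · left; omega
                · right
                  refine ⟨hx1, (hocchi x hlt).mp hx2, hlt, ?_⟩
                  intro o ho hdo hox hob
                  exact hx4 o ho hdo hox ((hocchi o hdo).mpr hob)
              · rintro (he | ⟨hx1, hx2, hx3, hx4⟩)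
                · subst he
                  exact ⟨hdhi, hdocc, le_rfl, fun o ho hdo hod _ => by omega⟩
                · refine ⟨hx1, (hocchi x hx3).mpr hx2, le_of_lt hx3, ?_⟩
                  intro o ho hdo hox hoc
                  exact hx4 o ho hdo hox ((hocchi o hdo).mp hoc)
            have hB : unblkF hi k b cj = insert cj E := by
              ext x
              rw [mem_unblkF, Finset.mem_insert, hmE]
              constructor
              · rintro ⟨hx1, hx2, hx3, hx4⟩
                rcases eq_or_lt_of_le hx3 with he | hlt
                · left; omega
                · right
                  have hdx : d < x := by
                    rcases hmidb x hx2 with h | h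
                    · omega
                    · exact h
                  refine ⟨hx1, hx2, hdx, ?_⟩
                  intro o ho hdo hox
                  exact hx4 o ho (by omega) hox
              · rintro (he | ⟨hx1, hx2, hx3, hx4⟩)
                · subst he
                  exact ⟨hcjC.2.1, hocc_cj, le_rfl, fun o ho hco hox hob => by omega⟩
                · refine ⟨hx1, hx2, by omega, ?_⟩
                  intro o ho hco hox hob
                  rcases hmidb o hob with h | h
                  · omega
                  · exact hx4 o ho h hox hob
            have hcjE : cj ∉ E := fun h => by
              have := ((hmE cj).mp h).2.2.1; omega
            have hdE : d ∉ E := fun h => by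
              have := ((hmE d).mp h).2.2.1; omega
            set pE : Finset ℕ := (Finset.range (k + 1)).filter
                (fun p => ∃ x, b p = some x ∧ x ∈ E) with hpE
            have hmpE : ∀ p, p ∈ pE ↔ p ≤ k ∧ ∃ x, b p = some x ∧ x ∈ E := by
              intro p
              simp [hpE, Finset.mem_filter, Finset.mem_range, Nat.lt_succ_iff]
            have hC : ubpF hi k c d = insert j pE := by
              ext p
              rw [mem_ubpF, Finset.mem_insert, hmpE, hA]
              constructor
              · rintro ⟨hp1, x, hpx, hxU⟩
                rcases Finset.mem_insert.mp hxU with he | hxE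
                · subst he
                  rcases hcsome p d hpx with ⟨h1, h2⟩ | ⟨h1, _, _⟩
                  · exact absurd (hhighb p h1 hp1 d h2) (lt_irrefl d)
                  · left; exact h1
                · right
                  have hxd : d < x := ((hmE x).mp hxE).2.2.1
                  exact ⟨hp1, x, (hposhi p x hxd hp1).mp hpx, hxE⟩
              · rintro (he | ⟨hp1, x, hpx, hxE⟩)
                · subst he
                  exact ⟨hj, d, hcj h0, Finset.mem_insert_self d E⟩
                · have hxd : d < x := ((hmE x).mp hxE).2.2.1
                  exact ⟨hp1, x, (hposhi p x hxd hp1).mpr hpx, Finset.mem_insert_of_mem hxE⟩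
            have hjpE : j ∉ pE := by
              intro h
              obtain ⟨_, x, hx1, hx2⟩ := (hmpE j).mp h
              have hxd : d < x := ((hmE x).mp hx2).2.2.1
              rw [hbj] at hx1
              injection hx1 with hx1; omega
            have hsub : insert j pE ⊆ ubpF hi k b cj := by
              intro p hp
              rw [mem_ubpF, hB]
              rcases Finset.mem_insert.mp hp with he | hpE'
              · subst he
                exact ⟨hj, cj, hbj, Finset.mem_insert_self _ _⟩
              · obtain ⟨hp1, x, hx1, hx2⟩ := (hmpE p).mp hpE'
                exact ⟨hp1, x, hx1, Finset.mem_insert_of_mem hx2⟩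
            rw [hA, hC]
            calc ∑ p ∈ insert j pE, 2 ^ p
                ≤ ∑ p ∈ ubpF hi k b cj, 2 ^ p :=
                  Finset.sum_le_sum_of_subset hsub
              _ ≤ ∑ x ∈ unblkF hi k b cj, ℓ x := hlen cj hcjC
              _ = ∑ x ∈ insert cj E, ℓ x := by rw [hB]
              _ = ℓ cj + ∑ x ∈ E, ℓ x := Finset.sum_insert hcjE
              _ = Function.update ℓ d (ℓ cj) d + ∑ x ∈ E, Function.update ℓ d (ℓ cj) x := by
                  rw [Function.update_self]
                  congr 1
                  refine Finset.sum_congr rfl ?_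
                  intro x hx
                  have hxne : x ≠ d := by
                    have := ((hmE x).mp hx).2.2.1; omega
                  exact (Function.update_of_ne hxne _ _).symm
              _ = ∑ x ∈ insert d E, Function.update ℓ d (ℓ cj) x :=
                  (Finset.sum_insert hdE).symm
          · -- empty case : i < d, j ≠ 0
            have hidlt : i < d := by omega
            have hU : unblkF hi k c i = ∅ := by
              rw [Finset.eq_empty_iff_forall_notMem]
              intro x hx
              obtain ⟨hx1, hx2, hx3, hx4⟩ := mem_unblkF.mp hx
              exact hx4 d hdodd' hidlt (hoccd x hx2) ⟨j, hj, hcj h0⟩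
            have hP : ubpF hi k c i = ∅ := by
              rw [Finset.eq_empty_iff_forall_notMem]
              intro p hp
              obtain ⟨hp1, x, hpx, hxU⟩ := mem_ubpF.mp hp
              rw [hU] at hxU
              exact absurd hxU (Finset.notMem_empty x)
            rw [hU, hP]; simp
end

section
/- For every b ∈ ℂ and every d ∈ C: up₊(b,d) ⊒ up(b,d); that is, the colour-witness update is at least as good as the concise classic update with respect to the order ⊒. -/
open scoped Classical

/-- A potential witness: a sequence `b = b_k,…,b_0` over `C_⊥ = C⁻ ∪ {⊥}`, with `⊥ = none`. -/
abbrev Wit : Type := ℕ → Option ℕ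

/-- The statespace of the update games: witnesses together with the top element `WON`,
which is represented by `none`. -/
abbrev St : Type := Option Wit

/-- Indices `≤ k` of entries of the witness carrying an even colour. -/
noncomputable def evenIdx (k : ℕ) (b : Wit) : Finset ℕ :=
  (Finset.range (k + 1)).filter fun i => ∃ c, b i = some c ∧ Even c

/-- Indices `≤ k` of entries of the witness carrying an odd colour. -/
noncomputable def oddIdx (k : ℕ) (b : Wit) : Finset ℕ :=
  (Finset.range (k + 1)).filter fun i => ∃ c, b i = some c ∧ Odd c

/-- `evenodd(b)`: the even indices if no entry is odd; otherwise the even indices above the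
largest odd index `o`, together with `o`. -/
noncomputable def evenodd (k : ℕ) (b : Wit) : Finset ℕ :=
  if h : (oddIdx k b).Nonempty then
    ((evenIdx k b).filter fun i => (oddIdx k b).max' h < i) ∪ {(oddIdx k b).max' h}
  else evenIdx k b

/-- The value of a witness: `val(b) = Σ_{i ∈ evenodd(b)} 2^i`. -/
noncomputable def valw (k : ℕ) (b : Wit) : ℕ := ∑ i ∈ evenodd k b, 2 ^ i

/-- The order `⪰` on `C_⊥`: every colour is better than `⊥`, even colours are better than odd
ones, higher even colours are better than lower even ones, and lower odd colours are better
than higher odd ones. -/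
def colGe : Option ℕ → Option ℕ → Prop
  | _, none => True
  | none, some _ => False
  | some a, some b => (Even a ∧ (Odd b ∨ b ≤ a)) ∨ (Odd a ∧ Odd b ∧ a ≤ b)

/-- The lexicographic order `⊒` on sequences of length `k+1`, with the entry of index `k`
most significant, comparing entries by `⪰`. -/
def seqGe (k : ℕ) (a b : Wit) : Prop :=
  (∀ i ≤ k, a i = b i) ∨
  ∃ i ≤ k, (∀ i', i < i' → i' ≤ k → a i' = b i') ∧ colGe (a i) (b i) ∧ a i ≠ b i

/-- The order `⊒` on the statespace, with top element `WON = none`. -/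
def stGe (k : ℕ) : St → St → Prop
  | none, _ => True
  | some _, none => False
  | some a, some b => seqGe k a b

/-- The truncation `↓₁b`: for each odd colour, all occurrences other than the leftmost
(highest-index, among indices `≤ k`) one are replaced by `⊥`. -/
noncomputable def trunc (k : ℕ) (b : Wit) : Wit := fun i =>
  match b i with
  | none => none
  | some o => if Odd o ∧ ∃ i', i < i' ∧ i' ≤ k ∧ b i' = some o then none else some o

/-- The classic raw update `ru'(b,d)` of a witness `b = b_k,…,b_0` over `C_⊥` (with
`C = {lo,…,hi}`) upon reading a vertex of colour `d`. -/
noncomputable def ruC (k hi : ℕ) (b : Wit) (d : ℕ) : Wit :=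
  if Odd d ∧ d = hi then fun _ => none
  else if (Odd d ∧ ∀ i ≤ k, b i = none ∨ ∃ c, b i = some c ∧ d ≤ c)
       ∨ (Even d ∧ ∀ i ≤ k, ∃ c, b i = some c ∧ Even c ∧ d ≤ c) then b
  else if Odd d then
    let j := Nat.findGreatest (fun j' => ∃ c, b j' = some c ∧ c < d) k
    fun i => if j < i then b i else if i = j ∧ j ≠ 0 then some d else none
  else
    let j0 := Nat.findGreatest (fun j' => ∃ c, b j' = some c ∧ c < d) k
    let j1 := if h : ∃ j', j' ≤ k ∧ ¬ ∃ c, b j' = some c ∧ Even c then Nat.find h else 0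
    let j := max j0 j1
    fun i => if j < i then b i else if i = j then some d else none

/-- The update `up(b,d)`: `↓₁ru'(b,d)` if `val(ru'(b,d)) ≤ e`, and `WON` otherwise;
moreover `up(WON,d) = WON`. -/
noncomputable def upC (k hi e : ℕ) : St → ℕ → St
  | none, _ => none
  | some b, d => if valw k (ruC k hi b d) ≤ e then some (trunc k (ruC k hi b d)) else none

/-- The colour-witness raw update `ru₊(b,d)` of a concise witness `b = b_k,…,b_0` over `C_⊥`
(with `C = {lo,…,hi}`) upon reading a vertex of colour `d`. -/
noncomputable def ruP (k hi : ℕ) (b : Wit) (d : ℕ) : Wit :=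
  if Odd d ∧ d = hi then fun _ => none
  else if Odd d ∧ ∀ i ≤ k, b i = none ∨ ∃ c, b i = some c ∧ d < c then b
  else if Odd d then
    let j := Nat.findGreatest (fun j' => ∃ c, b j' = some c ∧ c ≤ d) k
    fun i => if j < i then b i else if i = j ∧ j ≠ 0 then some d else none
  else if ∃ i ≤ k, ∃ c, b i = some c ∧ Odd c ∧ c < d then
    let j := Nat.findGreatest (fun j' => ∃ c, b j' = some c ∧ Odd c ∧ c < d) k
    fun i => if j ≤ i then (if ∃ c, b i = some c ∧ c < d then some d else b i)
             else if i = 0 then some d else none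
  else if h : ∃ i, i ≤ k ∧ ¬ ∃ c, b i = some c ∧ Even c then
    let j := Nat.find h
    fun i => if j < i then (if ∃ c, b i = some c ∧ c ≤ d then some d else b i)
             else if i = j then some d else none
  else fun i => if ∃ c, b i = some c ∧ c ≤ d then some d else b i

/-- The colour-witness update `up₊(b,d)`: `ru₊(b,d)` if `val(ru₊(b,d)) ≤ e`, and `WON`
otherwise; moreover `up₊(WON,d) = WON`. -/
noncomputable def upP (k hi e : ℕ) : St → ℕ → St
  | none, _ => none
  | some b, d => if valw k (ruP k hi b d) ≤ e then some (ruP k hi b d) else none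

/-- Membership in `ℂ`, the set of concise witnesses: sequences over `C_⊥` that are ordered,
concise (each odd colour occurs at most once and `b_0` is not odd) and of value at most `e`. -/
def memC (lo hi e k : ℕ) (b : Wit) : Prop :=
  (∀ i ≤ k, b i = none ∨ ∃ c, b i = some c ∧ CminusMem lo hi c) ∧
  (∀ i j, j < i → i ≤ k → ∀ ci cj, b i = some ci → b j = some cj → cj ≤ ci) ∧
  (∀ o, Odd o → ∀ i j, i ≤ k → j ≤ k → i ≠ j → b i = some o → ¬ b j = some o) ∧
  (∀ c, b 0 = some c → ¬ Odd c) ∧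
  valw k b ≤ e

/-- The state `s` belongs to `ℂ ∪ {WON}`. -/
def memCW (lo hi e k : ℕ) (s : St) : Prop :=
  s = none ∨ ∃ b, s = some b ∧ memC lo hi e k b

/-- The antagonistic update built from an update function `f`:
`min_⊒ { f(c,d) : c ∈ ℂ ∪ {WON}, c ⊒ b }`, with `au(WON,d) = WON`. -/
noncomputable def antag (lo hi e k : ℕ) (f : St → ℕ → St) (s : St) (d : ℕ) : St :=
  match s with
  | none => none
  | some b =>
    if h : ∃ x : St, (∃ c : St, memCW lo hi e k c ∧ stGe k c (some b) ∧ f c d = x) ∧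
        ∀ y : St, (∃ c : St, memCW lo hi e k c ∧ stGe k c (some b) ∧ f c d = y) → stGe k y x
    then h.choose else none

/-- The antagonistic update `au(b,d) = min_⊒ { up(c,d) : c ∈ ℂ ∪ {WON}, c ⊒ b }`. -/
noncomputable def auC (lo hi e k : ℕ) : St → ℕ → St := antag lo hi e k (upC k hi e)

/-- The antagonistic update `au₊(b,d) = min_⊒ { up₊(c,d) : c ∈ ℂ ∪ {WON}, c ⊒ b }`. -/
noncomputable def auP (lo hi e k : ℕ) : St → ℕ → St := antag lo hi e k (upP k hi e)


section Aux

lemma colGe_refl (x : Option ℕ) : colGe x x := by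
  cases x with
  | none => trivial
  | some a =>
    rcases Nat.even_or_odd a with h | h
    · exact Or.inl ⟨h, Or.inr le_rfl⟩
    · exact Or.inr ⟨h, h, le_rfl⟩

lemma colGe_none (x : Option ℕ) : colGe x none := by
  cases x <;> trivial

lemma trunc_cases (k : ℕ) (a : Wit) (i : ℕ) : trunc k a i = a i ∨ trunc k a i = none := by
  unfold trunc
  cases a i with
  | none => exact Or.inr rfl
  | some o =>
    by_cases h : Odd o ∧ ∃ i', i < i' ∧ i' ≤ k ∧ a i' = some o
    · exact Or.inr (if_pos h)
    · exact Or.inl (if_neg h)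

lemma trunc_eq_none {k : ℕ} {a : Wit} {i o : ℕ} (h : a i = some o) (ho : Odd o)
    (hdup : ∃ i', i < i' ∧ i' ≤ k ∧ a i' = some o) : trunc k a i = none := by
  unfold trunc
  rw [h]
  exact if_pos ⟨ho, hdup⟩

lemma trunc_eq_none' {k : ℕ} {a : Wit} {i : ℕ} (h : a i = none) : trunc k a i = none := by
  unfold trunc
  rw [h]

lemma seqGe_of_colGe {k : ℕ} {a b : Wit} (h : ∀ i ≤ k, colGe (a i) (b i)) : seqGe k a b := by
  by_cases hall : ∀ i ≤ k, a i = b i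
  · exact Or.inl hall
  · push_neg at hall
    obtain ⟨i0, hi0k, hne0⟩ := hall
    set S : Finset ℕ := (Finset.range (k+1)).filter (fun i => a i ≠ b i) with hS
    have hSne : S.Nonempty :=
      ⟨i0, Finset.mem_filter.2 ⟨Finset.mem_range.2 (Nat.lt_succ_of_le hi0k), hne0⟩⟩
    set m := S.max' hSne with hm
    have hmem := S.max'_mem hSne
    rw [Finset.mem_filter, Finset.mem_range, Nat.lt_succ_iff] at hmem
    refine Or.inr ⟨m, hmem.1, ?_, h m hmem.1, hmem.2⟩
    intro i' hii' hi'k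
    by_contra hne
    have : i' ∈ S := Finset.mem_filter.2 ⟨Finset.mem_range.2 (Nat.lt_succ_of_le hi'k), hne⟩
    exact absurd (Finset.le_max' S i' this) (not_le.2 hii')

lemma mem_evenIdx {k : ℕ} {a : Wit} {i : ℕ} :
    i ∈ evenIdx k a ↔ i ≤ k ∧ ∃ c, a i = some c ∧ Even c := by
  simp [evenIdx, Nat.lt_succ_iff]

lemma mem_oddIdx {k : ℕ} {a : Wit} {i : ℕ} :
    i ∈ oddIdx k a ↔ i ≤ k ∧ ∃ c, a i = some c ∧ Odd c := by
  simp [oddIdx, Nat.lt_succ_iff]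

lemma valw_le_of {k : ℕ} {a b : Wit}
    (he : evenIdx k a ⊆ evenIdx k b) (ho : oddIdx k a = oddIdx k b) :
    valw k a ≤ valw k b := by
  unfold valw evenodd
  rw [ho]
  by_cases h : (oddIdx k b).Nonempty
  · rw [dif_pos h, dif_pos h]
    refine Finset.sum_le_sum_of_subset (Finset.union_subset_union ?_ le_rfl)
    exact Finset.filter_subset_filter _ he
  · rw [dif_neg h, dif_neg h]
    exact Finset.sum_le_sum_of_subset he

lemma valw_eq_of {k : ℕ} {a b : Wit} (heq : evenIdx k a = evenIdx k b)
    (hsub : oddIdx k b ⊆ oddIdx k a)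
    (hmax : ∀ h : (oddIdx k a).Nonempty, (oddIdx k a).max' h ∈ oddIdx k b) :
    valw k a = valw k b := by
  unfold valw evenodd
  by_cases h : (oddIdx k a).Nonempty
  · have hb : (oddIdx k b).Nonempty := ⟨_, hmax h⟩
    have hmm : (oddIdx k a).max' h = (oddIdx k b).max' hb :=
      le_antisymm (Finset.le_max' _ _ (hmax h))
        (Finset.max'_le _ _ _ fun y hy => Finset.le_max' _ _ (hsub hy))
    rw [dif_pos h, dif_pos hb, heq, hmm]
  · have hb : ¬ (oddIdx k b).Nonempty := by
      rintro ⟨x, hx⟩; exact h ⟨x, hsub hx⟩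
    rw [dif_neg h, dif_neg hb, heq]

lemma valw_le_ptwise {k d : ℕ} (hd : Even d) {a b : Wit}
    (H : ∀ i ≤ k, a i = b i ∨ (a i = none ∧ b i = some d)) : valw k a ≤ valw k b := by
  have hnodd : ¬ Odd d := Nat.not_odd_iff_even.2 hd
  refine valw_le_of ?_ ?_
  · intro i hi
    rw [mem_evenIdx] at hi ⊢
    obtain ⟨hik, c, hc, hec⟩ := hi
    rcases H i hik with h | ⟨h1, _⟩
    · exact ⟨hik, c, h ▸ hc, hec⟩
    · rw [h1] at hc; exact absurd hc (by simp)
  · ext i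
    rw [mem_oddIdx, mem_oddIdx]
    constructor
    · rintro ⟨hik, c, hc, hoc⟩
      rcases H i hik with h | ⟨h1, _⟩
      · exact ⟨hik, c, h ▸ hc, hoc⟩
      · rw [h1] at hc; exact absurd hc (by simp)
    · rintro ⟨hik, c, hc, hoc⟩
      rcases H i hik with h | ⟨_, h2⟩
      · exact ⟨hik, c, h.symm ▸ hc, hoc⟩
      · rw [h2] at hc
        cases hc
        exact absurd hoc hnodd

lemma valw_eq_ptwise {k d : ℕ} (hd : Odd d) {a b : Wit}
    (H : ∀ i ≤ k, a i = b i ∨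
      (a i = some d ∧ b i = none ∧ ∃ t, i < t ∧ t ≤ k ∧ a t = some d ∧ b t = some d)) :
    valw k a = valw k b := by
  have hnev : ¬ Even d := Nat.not_even_iff_odd.2 hd
  refine valw_eq_of ?_ ?_ ?_
  · ext i
    rw [mem_evenIdx, mem_evenIdx]
    constructor
    · rintro ⟨hik, c, hc, hec⟩
      rcases H i hik with h | ⟨h1, _, _⟩
      · exact ⟨hik, c, h ▸ hc, hec⟩
      · rw [h1] at hc; cases hc; exact absurd hec hnev
    · rintro ⟨hik, c, hc, hec⟩
      rcases H i hik with h | ⟨_, h2, _⟩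
      · exact ⟨hik, c, h.symm ▸ hc, hec⟩
      · rw [h2] at hc; exact absurd hc (by simp)
  · intro i hi
    rw [mem_oddIdx] at hi ⊢
    obtain ⟨hik, c, hc, hoc⟩ := hi
    rcases H i hik with h | ⟨_, h2, _⟩
    · exact ⟨hik, c, h.symm ▸ hc, hoc⟩
    · rw [h2] at hc; exact absurd hc (by simp)
  · intro h
    set m := (oddIdx k a).max' h with hm
    have hmem := (oddIdx k a).max'_mem h
    rw [mem_oddIdx] at hmem
    obtain ⟨hmk, c, hc, hoc⟩ := hmem
    rcases H m hmk with heq | ⟨_, _, t, hmt, htk, hat, _⟩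
    · rw [mem_oddIdx]; exact ⟨hmk, c, heq ▸ hc, hoc⟩
    · have : t ∈ oddIdx k a := mem_oddIdx.2 ⟨htk, d, hat, hd⟩
      exact absurd (Finset.le_max' _ _ this) (not_le.2 hmt)

end Aux

section Master

variable {k hi d : ℕ} {b : Wit}

/-- The master case analysis comparing `ruP` and `ruC` pointwise. -/
lemma master
    (hord : ∀ i j, j < i → i ≤ k → ∀ ci cj, b i = some ci → b j = some cj → cj ≤ ci)
    (hconc : ∀ o, Odd o → ∀ i j, i ≤ k → j ≤ k → i ≠ j → b i = some o → ¬ b j = some o)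
    (hb0 : ∀ c, b 0 = some c → ¬ Odd c) :
    ∀ i ≤ k, ruP k hi b d i = ruC k hi b d i ∨
      (Even d ∧ ruC k hi b d i = none ∧ ruP k hi b d i = some d) ∨
      (ruP k hi b d i = none ∧ ruC k hi b d i = some d ∧ Odd d ∧
        ∃ t, i < t ∧ t ≤ k ∧ ruC k hi b d t = some d ∧ ruP k hi b d t = some d) := by
  by_cases hA : Odd d ∧ d = hi
  · have h1 : ruC k hi b d = fun _ => none := by unfold ruC; rw [if_pos hA]
    have h2 : ruP k hi b d = fun _ => none := by unfold ruP; rw [if_pos hA]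
    intro i _
    left; rw [h1, h2]
  rcases Nat.even_or_odd d with hev | hodd
  · -- d even
    have hOddF : ¬ Odd d := Nat.not_odd_iff_even.2 hev
    by_cases hfix : ∀ i ≤ k, ∃ c, b i = some c ∧ Even c ∧ d ≤ c
    · -- C1 : ruC fixpoint, ruP also fixes pointwise
      have hruC : ruC k hi b d = b := by
        unfold ruC; rw [if_neg hA, if_pos (Or.inr ⟨hev, hfix⟩)]
      have hP4 : ¬ ∃ i ≤ k, ∃ c, b i = some c ∧ Odd c ∧ c < d := by
        rintro ⟨i, hik, c, hc, hoc, -⟩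
        obtain ⟨c', hc', hec', -⟩ := hfix i hik
        rw [hc] at hc'; cases hc'
        exact (Nat.not_odd_iff_even.2 hec') hoc
      have hP5 : ¬ ∃ i, i ≤ k ∧ ¬ ∃ c, b i = some c ∧ Even c := by
        rintro ⟨i, hik, hni⟩
        obtain ⟨c, hc, hec, -⟩ := hfix i hik
        exact hni ⟨c, hc, hec⟩
      have hruP : ruP k hi b d = fun i => if ∃ c, b i = some c ∧ c ≤ d then some d else b i := by
        unfold ruP
        rw [if_neg hA, if_neg (fun h => hOddF h.1), if_neg hOddF, if_neg hP4, dif_neg hP5]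
      intro i hik
      left
      rw [hruP, hruC]
      dsimp only
      by_cases hc : ∃ c, b i = some c ∧ c ≤ d
      · rw [if_pos hc]
        obtain ⟨c, hbc, hcd⟩ := hc
        obtain ⟨c', hb', -, hd'⟩ := hfix i hik
        rw [hbc] at hb'; cases hb'
        rw [hbc]
        congr 1
        omega
      · rw [if_neg hc]
    · -- ruC moves
      have hPC2F : ¬ ((Odd d ∧ ∀ i ≤ k, b i = none ∨ ∃ c, b i = some c ∧ d ≤ c)
           ∨ (Even d ∧ ∀ i ≤ k, ∃ c, b i = some c ∧ Even c ∧ d ≤ c)) := by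
        rintro (⟨h, -⟩ | ⟨-, h⟩)
        · exact hOddF h
        · exact hfix h
      set j0 := Nat.findGreatest (fun j' => ∃ c, b j' = some c ∧ c < d) k with hj0def
      set j1 := (if h : ∃ j', j' ≤ k ∧ ¬ ∃ c, b j' = some c ∧ Even c then Nat.find h else 0)
        with hj1def
      have hruC : ruC k hi b d =
          fun i => if max j0 j1 < i then b i else if i = max j0 j1 then some d else none := by
        unfold ruC
        rw [if_neg hA, if_neg hPC2F, if_neg hOddF]
      have hj0k : j0 ≤ k := Nat.findGreatest_le k
      have hgreat : ∀ i, j0 < i → i ≤ k → ∀ c, b i = some c → ¬ c < d := by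
        intro i hi hik c hc hlt
        exact Nat.findGreatest_is_greatest (P := fun j' => ∃ c, b j' = some c ∧ c < d)
          hi hik ⟨c, hc, hlt⟩
      by_cases hP4 : ∃ i ≤ k, ∃ c, b i = some c ∧ Odd c ∧ c < d
      · -- C2a : some odd entry below d
        set jP := Nat.findGreatest (fun j' => ∃ c, b j' = some c ∧ Odd c ∧ c < d) k with hjPdef
        have hruP : ruP k hi b d =
            fun i => if jP ≤ i then (if ∃ c, b i = some c ∧ c < d then some d else b i)
              else if i = 0 then some d else none := by
          unfold ruP
          rw [if_neg hA, if_neg (fun h => hOddF h.1), if_neg hOddF, if_pos hP4]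
        obtain ⟨w, hwk, cw, hbw, how, hcwd⟩ := hP4
        have hjPk : jP ≤ k := Nat.findGreatest_le k
        obtain ⟨cPP, hbPP, hoPP, hcPPd⟩ : ∃ c, b jP = some c ∧ Odd c ∧ c < d :=
          Nat.findGreatest_spec (P := fun j' => ∃ c, b j' = some c ∧ Odd c ∧ c < d)
            hwk ⟨cw, hbw, how, hcwd⟩
        have hjPj0 : jP ≤ j0 :=
          Nat.le_findGreatest (P := fun j' => ∃ c, b j' = some c ∧ c < d)
            hjPk ⟨cPP, hbPP, hcPPd⟩
        obtain ⟨c0, hbc0, hc0d⟩ : ∃ c, b j0 = some c ∧ c < d :=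
          Nat.findGreatest_spec (P := fun j' => ∃ c, b j' = some c ∧ c < d)
            hwk ⟨cw, hbw, hcwd⟩
        have h5 : ∃ j', j' ≤ k ∧ ¬ ∃ c, b j' = some c ∧ Even c := by
          refine ⟨jP, hjPk, ?_⟩
          rintro ⟨c', hc', hec'⟩
          rw [hbPP] at hc'; cases hc'
          exact (Nat.not_odd_iff_even.2 hec') hoPP
        have hj1jP : j1 ≤ jP := by
          rw [hj1def, dif_pos h5]
          exact Nat.find_min' h5 ⟨hjPk, fun ⟨c', hc', hec'⟩ => by
            rw [hbPP] at hc'; cases hc'; exact (Nat.not_odd_iff_even.2 hec') hoPP⟩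
        have hmax : max j0 j1 = j0 := max_eq_left (hj1jP.trans hjPj0)
        intro i hik
        rw [hruP, hruC, hmax]
        dsimp only
        rcases lt_trichotomy j0 i with h1 | h1 | h1
        · left
          rw [if_pos (show jP ≤ i by omega),
            if_neg (show ¬ ∃ c, b i = some c ∧ c < d from
              fun ⟨c, hc, hcd⟩ => hgreat i h1 hik c hc hcd),
            if_pos (show j0 < i from h1)]
        · left
          rw [if_pos (show jP ≤ i by omega),
            if_pos (show ∃ c, b i = some c ∧ c < d from ⟨c0, h1 ▸ hbc0, hc0d⟩),
            if_neg (show ¬ j0 < i by omega), if_pos (show i = j0 from h1.symm)]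
        · -- i < j0
          rw [if_neg (show ¬ j0 < i by omega), if_neg (show i ≠ j0 by omega)]
          by_cases h2 : jP ≤ i
          · rw [if_pos (show jP ≤ i from h2)]
            rcases hbi : b i with _ | c
            · left; simp
            · have hcd : c < d := by
                have := hord j0 i h1 hj0k c0 c hbc0 hbi; omega
              rw [if_pos (show ∃ c', some c = some c' ∧ c' < d from ⟨c, rfl, hcd⟩)]
              exact Or.inr (Or.inl ⟨hev, rfl, rfl⟩)
          · rw [if_neg (show ¬ jP ≤ i from h2)]
            by_cases h3 : i = 0
            · rw [if_pos (show i = 0 from h3)]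
              exact Or.inr (Or.inl ⟨hev, rfl, rfl⟩)
            · rw [if_neg (show ¬ i = 0 from h3)]
              left; rfl
      · by_cases hP5 : ∃ i, i ≤ k ∧ ¬ ∃ c, b i = some c ∧ Even c
        · -- C2b
          have hj1 : j1 = Nat.find hP5 := by rw [hj1def, dif_pos hP5]
          have hruP : ruP k hi b d =
              fun i => if Nat.find hP5 < i then
                  (if ∃ c, b i = some c ∧ c ≤ d then some d else b i)
                else if i = Nat.find hP5 then some d else none := by
            unfold ruP
            rw [if_neg hA, if_neg (fun h => hOddF h.1), if_neg hOddF, if_neg hP4, dif_pos hP5]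
          have hj1k : j1 ≤ k := by rw [hj1]; exact (Nat.find_spec hP5).1
          rcases le_or_gt j0 j1 with hj01 | hj10
          · -- j = j1
            have hmax : max j0 j1 = j1 := max_eq_right hj01
            intro i hik
            left
            rw [hruP, hruC, hmax, ← hj1]
            dsimp only
            rcases lt_trichotomy j1 i with h1 | h1 | h1
            · rw [if_pos (show j1 < i from h1)]
              by_cases hcc : ∃ c, b i = some c ∧ c ≤ d
              · rw [if_pos (show ∃ c, b i = some c ∧ c ≤ d from hcc),
                  if_pos (show j1 < i from h1)]
                obtain ⟨c, hc, hcd⟩ := hcc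
                have : ¬ c < d := hgreat i (by omega) hik c hc
                rw [hc]
                congr 1
                omega
              · rw [if_neg (show ¬ ∃ c, b i = some c ∧ c ≤ d from hcc),
                  if_pos (show j1 < i from h1)]
            · rw [if_neg (show ¬ j1 < i by omega), if_neg (show ¬ j1 < i by omega),
                if_pos (show i = j1 from h1.symm)]
            · rw [if_neg (show ¬ j1 < i by omega), if_neg (show ¬ j1 < i by omega),
                if_neg (show i ≠ j1 by omega)]
          · -- j1 < j0, j = j0
            have hmax : max j0 j1 = j0 := max_eq_left hj10.le
            obtain ⟨c0, hbc0, hc0d⟩ : ∃ c, b j0 = some c ∧ c < d :=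
              Nat.findGreatest_of_ne_zero hj0def.symm (by omega)
            intro i hik
            rw [hruP, hruC, hmax, ← hj1]
            dsimp only
            rcases lt_trichotomy j0 i with h1 | h1 | h1
            · left
              rw [if_pos (show j1 < i by omega)]
              by_cases hcc : ∃ c, b i = some c ∧ c ≤ d
              · rw [if_pos (show ∃ c, b i = some c ∧ c ≤ d from hcc),
                  if_pos (show j0 < i from h1)]
                obtain ⟨c, hc, hcd⟩ := hcc
                have : ¬ c < d := hgreat i h1 hik c hc
                rw [hc]
                congr 1
                omega
              · rw [if_neg (show ¬ ∃ c, b i = some c ∧ c ≤ d from hcc),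
                  if_pos (show j0 < i from h1)]
            · left
              rw [if_pos (show j1 < i by omega),
                if_pos (show ∃ c, b i = some c ∧ c ≤ d from ⟨c0, h1 ▸ hbc0, hc0d.le⟩),
                if_neg (show ¬ j0 < i by omega), if_pos (show i = j0 from h1.symm)]
            · -- i < j0
              rw [if_neg (show ¬ j0 < i by omega), if_neg (show i ≠ j0 by omega)]
              rcases lt_trichotomy j1 i with h2 | h2 | h2
              · rw [if_pos (show j1 < i from h2)]
                rcases hbi : b i with _ | c
                · left; simp
                · have hcd : c ≤ d := by
                    have := hord j0 i h1 hj0k c0 c hbc0 hbi; omega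
                  rw [if_pos (show ∃ c', some c = some c' ∧ c' ≤ d from ⟨c, rfl, hcd⟩)]
                  exact Or.inr (Or.inl ⟨hev, rfl, rfl⟩)
              · rw [if_neg (show ¬ j1 < i by omega), if_pos (show i = j1 from h2.symm)]
                exact Or.inr (Or.inl ⟨hev, rfl, rfl⟩)
              · rw [if_neg (show ¬ j1 < i by omega), if_neg (show i ≠ j1 by omega)]
                left; rfl
        · -- C2c : all entries even
          have hall : ∀ i ≤ k, ∃ c, b i = some c ∧ Even c := by
            intro i hik
            by_contra hno
            exact hP5 ⟨i, hik, hno⟩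
          have hj1 : j1 = 0 := by rw [hj1def, dif_neg hP5]
          have hmax : max j0 j1 = j0 := by rw [hj1]; omega
          have hruP : ruP k hi b d =
              fun i => if ∃ c, b i = some c ∧ c ≤ d then some d else b i := by
            unfold ruP
            rw [if_neg hA, if_neg (fun h => hOddF h.1), if_neg hOddF, if_neg hP4, dif_neg hP5]
          obtain ⟨w, hwk, cw, hbw, hcwd⟩ : ∃ w, w ≤ k ∧ ∃ c, b w = some c ∧ c < d := by
            push_neg at hfix
            obtain ⟨w, hwk, hw⟩ := hfix
            obtain ⟨c, hc, hec⟩ := hall w hwk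
            exact ⟨w, hwk, c, hc, hw c hc hec⟩
          obtain ⟨c0, hbc0, hc0d⟩ : ∃ c, b j0 = some c ∧ c < d :=
            Nat.findGreatest_spec (P := fun j' => ∃ c, b j' = some c ∧ c < d)
              hwk ⟨cw, hbw, hcwd⟩
          intro i hik
          rw [hruP, hruC, hmax]
          dsimp only
          rcases lt_trichotomy j0 i with h1 | h1 | h1
          · left
            by_cases hcc : ∃ c, b i = some c ∧ c ≤ d
            · rw [if_pos (show ∃ c, b i = some c ∧ c ≤ d from hcc),
                if_pos (show j0 < i from h1)]
              obtain ⟨c, hc, hcd⟩ := hcc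
              have : ¬ c < d := hgreat i h1 hik c hc
              rw [hc]
              congr 1
              omega
            · rw [if_neg (show ¬ ∃ c, b i = some c ∧ c ≤ d from hcc),
                if_pos (show j0 < i from h1)]
          · left
            rw [if_pos (show ∃ c, b i = some c ∧ c ≤ d from ⟨c0, h1 ▸ hbc0, hc0d.le⟩),
              if_neg (show ¬ j0 < i by omega), if_pos (show i = j0 from h1.symm)]
          · obtain ⟨c, hc, -⟩ := hall i hik
            have hcd : c ≤ d := by
              have := hord j0 i h1 hj0k c0 c hbc0 hc; omega
            rw [if_pos (show ∃ c, b i = some c ∧ c ≤ d from ⟨c, hc, hcd⟩),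
              if_neg (show ¬ j0 < i by omega), if_neg (show i ≠ j0 by omega)]
            exact Or.inr (Or.inl ⟨hev, rfl, rfl⟩)
  · -- d odd
    have hEvF : ¬ Even d := Nat.not_even_iff_odd.2 hodd
    by_cases hPP2 : ∀ i ≤ k, b i = none ∨ ∃ c, b i = some c ∧ d < c
    · -- B1 : both fixpoints, both equal b
      have hruP : ruP k hi b d = b := by
        unfold ruP; rw [if_neg hA, if_pos ⟨hodd, hPP2⟩]
      have hruC : ruC k hi b d = b := by
        unfold ruC
        rw [if_neg hA, if_pos (Or.inl ⟨hodd, fun i hik => (hPP2 i hik).imp id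
          (fun ⟨c, hc, hdc⟩ => ⟨c, hc, hdc.le⟩)⟩)]
      intro i _
      left; rw [hruP, hruC]
    · -- ruP moves
      set jP := Nat.findGreatest (fun j' => ∃ c, b j' = some c ∧ c ≤ d) k with hjPdef
      have hruP : ruP k hi b d =
          fun i => if jP < i then b i else if i = jP ∧ jP ≠ 0 then some d else none := by
        unfold ruP
        rw [if_neg hA, if_neg (fun h => hPP2 h.2), if_pos hodd]
      -- a witness index with entry ≤ d
      obtain ⟨w, hwk, cw, hbw, hcwd⟩ :
          ∃ w, w ≤ k ∧ ∃ c, b w = some c ∧ c ≤ d := by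
        push_neg at hPP2
        obtain ⟨w, hwk, hw1, hw2⟩ := hPP2
        rcases hbw : b w with _ | c
        · exact absurd hbw hw1
        · exact ⟨w, hwk, c, hbw, hw2 c hbw⟩
      have hjPk : jP ≤ k := Nat.findGreatest_le k
      obtain ⟨cP, hbP, hcPd⟩ : ∃ c, b jP = some c ∧ c ≤ d :=
        Nat.findGreatest_spec (P := fun j' => ∃ c, b j' = some c ∧ c ≤ d) hwk ⟨cw, hbw, hcwd⟩
      have hPgreat : ∀ i, jP < i → i ≤ k → ∀ c, b i = some c → d < c := by
        intro i hi hik c hc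
        by_contra hnc
        exact Nat.findGreatest_is_greatest (P := fun j' => ∃ c, b j' = some c ∧ c ≤ d)
          hi hik ⟨c, hc, not_lt.1 hnc⟩
      by_cases hPC2 : (Odd d ∧ ∀ i ≤ k, b i = none ∨ ∃ c, b i = some c ∧ d ≤ c)
           ∨ (Even d ∧ ∀ i ≤ k, ∃ c, b i = some c ∧ Even c ∧ d ≤ c)
      · -- B2 : ruC = b, and ruP = b pointwise on i ≤ k
        have hge : ∀ i ≤ k, b i = none ∨ ∃ c, b i = some c ∧ d ≤ c := by
          rcases hPC2 with ⟨_, h⟩ | ⟨h, _⟩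
          · exact h
          · exact absurd h hEvF
        have hruC : ruC k hi b d = b := by
          unfold ruC; rw [if_neg hA, if_pos hPC2]
        have hcPeq : cP = d := by
          rcases hge jP hjPk with h | ⟨c', hc', hdc'⟩
          · rw [h] at hbP; cases hbP
          · rw [hbP] at hc'; cases hc'; exact le_antisymm hcPd hdc'
        have hjP0 : jP ≠ 0 := by
          intro h0
          rw [h0, hcPeq] at hbP
          exact hb0 d hbP hodd
        intro i hik
        left
        rw [hruP, hruC]
        dsimp only
        rcases lt_trichotomy jP i with hlt | heq | hgt
        · rw [if_pos hlt]
        · rw [if_neg (by omega), if_pos ⟨heq.symm, hjP0⟩, ← heq, hbP, hcPeq]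
        · rw [if_neg (by omega), if_neg (by omega)]
          by_contra hne
          rcases hbi : b i with _ | c
          · exact hne hbi.symm
          · have hcle : c ≤ cP := hord jP i hgt hjPk cP c hbP hbi
            have hdle : d ≤ c := by
              rcases hge i hik with h | ⟨c', hc', hdc'⟩
              · rw [h] at hbi; cases hbi
              · rw [hbi] at hc'; cases hc'; exact hdc'
            have hcd : c = d := le_antisymm (hcle.trans_eq hcPeq) hdle
            rw [hcd] at hbi
            rw [hcPeq] at hbP
            exact hconc d hodd i jP hik hjPk (by omega) hbi hbP
      · -- B3 : ruC also moves
        set jC := Nat.findGreatest (fun j' => ∃ c, b j' = some c ∧ c < d) k with hjCdef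
        have hruC : ruC k hi b d =
            fun i => if jC < i then b i else if i = jC ∧ jC ≠ 0 then some d else none := by
          unfold ruC
          rw [if_neg hA, if_neg hPC2, if_pos hodd]
        obtain ⟨w', hw'k, cw', hbw', hcw'd⟩ :
            ∃ w', w' ≤ k ∧ ∃ c, b w' = some c ∧ c < d := by
          rw [not_or] at hPC2
          have := hPC2.1
          push_neg at this
          obtain ⟨w', hw'k, hw'1, hw'2⟩ := this hodd
          rcases hbw' : b w' with _ | c
          · exact absurd hbw' hw'1
          · exact ⟨w', hw'k, c, hbw', hw'2 c hbw'⟩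
        have hjCk : jC ≤ k := Nat.findGreatest_le k
        obtain ⟨cC, hbC, hcCd⟩ : ∃ c, b jC = some c ∧ c < d :=
          Nat.findGreatest_spec (P := fun j' => ∃ c, b j' = some c ∧ c < d) hw'k ⟨cw', hbw', hcw'd⟩
        have hCgreat : ∀ i, jC < i → i ≤ k → ∀ c, b i = some c → ¬ c < d := by
          intro i hi hik c hc hlt
          exact Nat.findGreatest_is_greatest (P := fun j' => ∃ c, b j' = some c ∧ c < d)
            hi hik ⟨c, hc, hlt⟩
        have hjCjP : jC ≤ jP :=
          Nat.le_findGreatest (P := fun j' => ∃ c, b j' = some c ∧ c ≤ d) hjCk ⟨cC, hbC, hcCd.le⟩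
        rcases eq_or_lt_of_le hjCjP with heq | hlt
        · intro i _
          left
          rw [hruP, hruC, heq]
        · -- jC < jP
          have hbPd : b jP = some d := by
            have : ¬ cP < d := hCgreat jP hlt hjPk cP hbP
            rw [hbP]; congr 1; omega
          have hjP0 : jP ≠ 0 := by
            intro h0; rw [h0] at hbPd; exact hb0 d hbPd hodd
          have hmid : ∀ i, jC < i → i < jP → b i = none := by
            intro i hi1 hi2
            rcases hbi : b i with _ | c
            · rfl
            · exfalso
              have hik : i ≤ k := le_trans (le_of_lt hi2) hjPk
              have hcle : c ≤ d := by
                have := hord jP i hi2 hjPk d c hbPd hbi; omega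
              have : ¬ c < d := hCgreat i hi1 hik c hbi
              have hcd : c = d := by omega
              rw [hcd] at hbi
              exact hconc d hodd i jP hik hjPk (by omega) hbi hbPd
          have hCjP : ruC k hi b d jP = some d := by
            rw [hruC]; dsimp only; rw [if_pos hlt, hbPd]
          have hPjP : ruP k hi b d jP = some d := by
            rw [hruP]; dsimp only
            rw [if_neg (lt_irrefl jP), if_pos ⟨rfl, hjP0⟩]
          intro i hik
          rcases lt_trichotomy jP i with h1 | h1 | h1
          · left; rw [hruP, hruC]; dsimp only
            rw [if_pos h1, if_pos (lt_trans hlt h1)]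
          · left; rw [← h1, hPjP, hCjP]
          · -- i < jP
            have hPi : ruP k hi b d i = none := by
              rw [hruP]; dsimp only
              rw [if_neg (by omega), if_neg (by rintro ⟨h, _⟩; omega)]
            rcases lt_trichotomy jC i with h2 | h2 | h2
            · left
              rw [hPi, hruC]; dsimp only
              rw [if_pos h2, hmid i h2 h1]
            · -- i = jC
              by_cases hC0 : jC = 0
              · left
                rw [hPi, hruC]; dsimp only
                rw [if_neg (by omega), if_neg (by rintro ⟨_, h⟩; exact h hC0)]
              · right; right
                refine ⟨hPi, ?_, hodd, jP, by omega, hjPk, hCjP, hPjP⟩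
                rw [hruC]; dsimp only
                rw [if_neg (by omega), if_pos ⟨h2.symm, hC0⟩]
            · left
              rw [hPi, hruC]; dsimp only
              rw [if_neg (by omega), if_neg (by rintro ⟨h, _⟩; omega)]

end Master

/-- For every `b ∈ ℂ` and every colour `d ∈ C`: `up₊(b,d) ⊒ up(b,d)`, where `k = ⌊log₂ e⌋`. -/
theorem upP_ge_upC (lo hi e : ℕ) (hlo : lo = 1 ∨ lo = 2) (hlohi : lo ≤ hi) (he : 1 ≤ e)
    (b : Wit) (hb : memC lo hi e (Nat.log 2 e) b)
    (d : ℕ) (hd : d ∈ Set.Icc lo hi) :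
    stGe (Nat.log 2 e) (upP (Nat.log 2 e) hi e (some b) d)
      (upC (Nat.log 2 e) hi e (some b) d) := by
  obtain ⟨-, hord, hconc, hb0, -⟩ := hb
  set k := Nat.log 2 e with hk
  have M := master (k := k) (hi := hi) (d := d) (b := b) hord hconc hb0
  have hvle : valw k (ruC k hi b d) ≤ valw k (ruP k hi b d) := by
    rcases Nat.even_or_odd d with hev | hodd
    · refine valw_le_ptwise hev ?_
      intro i hik
      rcases M i hik with h | ⟨-, h1, h2⟩ | ⟨-, -, hodd', -⟩
      · exact Or.inl h.symm
      · exact Or.inr ⟨h1, h2⟩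
      · exact absurd hodd' (Nat.not_odd_iff_even.2 hev)
    · refine le_of_eq (valw_eq_ptwise hodd ?_)
      intro i hik
      rcases M i hik with h | ⟨hev', -, -⟩ | ⟨h1, h2, -, t, ht1, ht2, ht3, ht4⟩
      · exact Or.inl h.symm
      · exact absurd hev' (Nat.not_even_iff_odd.2 hodd)
      · exact Or.inr ⟨h2, h1, t, ht1, ht2, ht3, ht4⟩
  simp only [upP, upC]
  by_cases hP : valw k (ruP k hi b d) ≤ e
  · rw [if_pos hP, if_pos (le_trans hvle hP)]
    show seqGe k _ _
    apply seqGe_of_colGe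
    intro i hik
    rcases M i hik with h | ⟨-, h1, -⟩ | ⟨h1, h2, hoddd, t, hit, htk, hct, -⟩
    · rcases trunc_cases k (ruC k hi b d) i with ht | ht
      · rw [ht, h]; exact colGe_refl _
      · rw [ht]; exact colGe_none _
    · rw [trunc_eq_none' h1]; exact colGe_none _
    · rw [trunc_eq_none h2 hoddd ⟨t, hit, htk, hct⟩]; exact colGe_none _
  · rw [if_neg hP]; trivial
end
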